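/- Let p ≥ 2, q ≥ 1, and a, b, c, d ∈ ℝ with a - b = c - d. Then, with signed powers a^r := |a|^{r-1}a, one has |a^{(p+q-1)/p} - b^{(p+q-1)/p}|^p ≤ (2^{p-2}(p+q-1)^p / (p^p q)) · (c^{p-1} - d^{p-1}) · (a^q - b^q). In particular there is C = C(p) > 0, independent of q, so the right-hand side is at most C q^{p-1} (c^{p-1}-d^{p-1})(a^q-b^q). -/

import Mathlib

open Real

/-- Signed power: `a^r := |a|^(r-1) * a`. -/
noncomputable def spow (a r : ℝ) : ℝ := |a| ^ (r - 1) * a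

/-!
Swapping `(a, b, c, d)` with `(b, a, d, c)` reduces to `b ≤ a`. Since `spow · t` has derivative
`t * |x| ^ (t - 1)` for `t ≥ 1`, both differences `spow a t - spow b t` with `t = (p + q - 1) / p`
and `spow a q - spow b q` are integrals over `[b, a]`, of `|x| ^ ((q - 1) / p)` and of its `p`-th
power `|x| ^ (q - 1)`. Jensen's inequality for `x ↦ x ^ p` bounds the `p`-th power of the first
integral by `(a - b) ^ (p - 1)` times the second, and `(c - d) ^ r ≤ 2 ^ (r - 1) * (c^r - d^r)`
follows from superadditivity of `x ^ r` when `c, d` have the same sign and from convexity when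
they do not. The uniform constant comes from `p + q - 1 ≤ p * q`.
-/

open MeasureTheory Set Interval

lemma spow_of_nonneg {x r : ℝ} (hx : 0 ≤ x) (hr : 0 < r) : spow x r = x ^ r := by
  rcases hx.eq_or_lt with rfl | hx
  · simp [spow, zero_rpow hr.ne']
  · rw [spow, abs_of_pos hx, ← rpow_add_one hx.ne', sub_add_cancel]

lemma spow_neg (x r : ℝ) : spow (-x) r = -spow x r := by
  simp [spow]

lemma spow_of_nonpos {x r : ℝ} (hx : x ≤ 0) (hr : 0 < r) : spow x r = -(-x) ^ r := by
  rw [← spow_of_nonneg (neg_nonneg.2 hx) hr, spow_neg, neg_neg]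

lemma monotone_spow {r : ℝ} (hr : 0 < r) : Monotone (spow · r) := by
  intro x y hxy
  rcases le_total 0 x with hx | hx
  · simp only [spow_of_nonneg hx hr, spow_of_nonneg (hx.trans hxy) hr]
    exact rpow_le_rpow hx hxy hr.le
  rcases le_total y 0 with hy | hy
  · simp only [spow_of_nonpos hx hr, spow_of_nonpos hy hr, neg_le_neg_iff]
    exact rpow_le_rpow (neg_nonneg.2 hy) (neg_le_neg hxy) hr.le
  · simp only [spow_of_nonpos hx hr, spow_of_nonneg hy hr]
    linarith [rpow_nonneg (neg_nonneg.2 hx) r, rpow_nonneg hy r]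

lemma continuous_abs_rpow {s : ℝ} (hs : 0 ≤ s) : Continuous fun x : ℝ => |x| ^ s :=
  continuous_abs.rpow_const fun _ => Or.inr hs

lemma hasDerivAt_spow {t : ℝ} (ht : 1 ≤ t) (x : ℝ) :
    HasDerivAt (spow · t) (t * |x| ^ (t - 1)) x := by
  have hcont : Continuous fun y : ℝ => |y| ^ (t - 1) := continuous_abs_rpow (by linarith)
  refine hasDerivAt_of_hasDerivAt_of_ne' (x := 0) (fun y hy => ?_)
    (hcont.mul continuous_id).continuousAt (continuous_const.mul hcont).continuousAt x
  have hy' : |y| ≠ 0 := abs_ne_zero.2 hy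
  refine (((hasDerivAt_abs hy).rpow_const (p := t - 1) (Or.inl hy')).mul
    (hasDerivAt_id y)).congr_deriv ?_
  have hpow : |y| ^ (t - 1 - 1) * |y| = |y| ^ (t - 1) := by
    rw [← rpow_add_one hy', sub_add_cancel]
  show _ * _ + _ * 1 = t * |y| ^ (t - 1)
  rw [id_eq]
  linear_combination (t - 1) * |y| ^ (t - 1 - 1) * sign_mul_self y + (t - 1) * hpow

lemma spow_sub_spow_eq_integral {t : ℝ} (ht : 1 ≤ t) (a b : ℝ) :
    spow a t - spow b t = t * ∫ x in b..a, |x| ^ (t - 1) := by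
  rw [← intervalIntegral.integral_const_mul]
  exact (intervalIntegral.integral_eq_sub_of_hasDerivAt (fun x _ => hasDerivAt_spow ht x)
    ((continuous_const.mul (continuous_abs_rpow (by linarith))).intervalIntegrable _ _)).symm

lemma rpow_intervalIntegral_le {f : ℝ → ℝ} {p a b : ℝ} (hp : 1 ≤ p) (hab : a ≤ b)
    (hf₀ : ∀ x ∈ Icc a b, 0 ≤ f x) (hf : IntervalIntegrable f volume a b)
    (hfp : IntervalIntegrable (fun x => f x ^ p) volume a b) :
    (∫ x in a..b, f x) ^ p ≤ (b - a) ^ (p - 1) * ∫ x in a..b, f x ^ p := by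
  rcases hab.eq_or_lt with rfl | hab
  · simp [zero_rpow (by linarith : p ≠ 0)]
  have hba : 0 < b - a := sub_pos.2 hab
  have hvol : volume (Ι a b) = ENNReal.ofReal (b - a) := by
    rw [uIoc_of_le hab.le, Real.volume_Ioc]
  have jensen := (convexOn_rpow hp).map_set_average_le
    (continuous_rpow_const (by linarith)).continuousOn isClosed_Ici
    (by simp [hvol, hab]) (by simp [hvol])
    (by
      rw [uIoc_of_le hab.le]
      exact ae_restrict_of_forall_mem measurableSet_Ioc fun x hx => hf₀ x (Ioc_subset_Icc_self hx))
    hf.def' hfp.def'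
  have hI : 0 ≤ ∫ x in a..b, f x := intervalIntegral.integral_nonneg hab.le hf₀
  rw [interval_average_eq, interval_average_eq, smul_eq_mul, smul_eq_mul,
    mul_rpow (inv_nonneg.2 hba.le) hI, inv_rpow hba.le,
    inv_mul_le_iff₀ (rpow_pos_of_pos hba p)] at jensen
  rwa [rpow_sub_one hba.ne', div_eq_mul_inv, mul_assoc]

theorem Real.rpow_add_le_mul_rpow_add_rpow {x y r : ℝ} (hx : 0 ≤ x) (hy : 0 ≤ y) (hr : 1 ≤ r) :
    (x + y) ^ r ≤ 2 ^ (r - 1) * (x ^ r + y ^ r) := by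
  lift x to NNReal using hx
  lift y to NNReal using hy
  exact_mod_cast NNReal.rpow_add_le_mul_rpow_add_rpow x y hr

lemma sub_rpow_le_two_rpow_mul_spow_sub {r c d : ℝ} (hr : 1 ≤ r) (hdc : d ≤ c) :
    (c - d) ^ r ≤ 2 ^ (r - 1) * (spow c r - spow d r) := by
  have hr₀ : 0 < r := by linarith
  have of_nonneg : ∀ x y : ℝ, 0 ≤ y → y ≤ x → (x - y) ^ r ≤ 2 ^ (r - 1) * (x ^ r - y ^ r) := by
    intro x y hy hyx
    have hsuper : (x - y) ^ r + y ^ r ≤ x ^ r := by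
      simpa using Real.add_rpow_le_rpow_add (sub_nonneg.2 hyx) hy hr
    have htwo : (1 : ℝ) ≤ 2 ^ (r - 1) := one_le_rpow one_le_two (by linarith)
    have hxy : 0 ≤ x ^ r - y ^ r := sub_nonneg.2 (rpow_le_rpow hy hyx hr₀.le)
    nlinarith [rpow_nonneg hy r]
  rcases le_total 0 d with hd | hd
  · rw [spow_of_nonneg (hd.trans hdc) hr₀, spow_of_nonneg hd hr₀]
    exact of_nonneg c d hd hdc
  rcases le_total c 0 with hc | hc
  · rw [spow_of_nonpos hc hr₀, spow_of_nonpos hd hr₀, neg_sub_neg, ← neg_sub_neg d c]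
    exact of_nonneg (-d) (-c) (neg_nonneg.2 hc) (neg_le_neg hdc)
  · rw [spow_of_nonneg hc hr₀, spow_of_nonpos hd hr₀, sub_neg_eq_add, sub_eq_add_neg]
    exact Real.rpow_add_le_mul_rpow_add_rpow hc (neg_nonneg.2 hd) hr

lemma spow_sub_mul_spow_sub_nonneg {r s a b c d : ℝ} (hr : 0 < r) (hs : 0 < s)
    (h : a - b = c - d) : 0 ≤ (spow c r - spow d r) * (spow a s - spow b s) := by
  rcases le_total b a with hba | hab
  · exact mul_nonneg (sub_nonneg.2 (monotone_spow hr (by linarith)))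
      (sub_nonneg.2 (monotone_spow hs hba))
  · exact mul_nonneg_of_nonpos_of_nonpos (sub_nonpos.2 (monotone_spow hr (by linarith)))
      (sub_nonpos.2 (monotone_spow hs hab))

lemma add_sub_one_rpow_div_le {p q : ℝ} (hp : 1 ≤ p) (hq : 1 ≤ q) :
    (p + q - 1) ^ p / (p ^ p * q) ≤ q ^ (p - 1) := by
  have hp₀ : 0 < p := by linarith
  have hq₀ : 0 < q := by linarith
  have hle : (p + q - 1) ^ p ≤ p ^ p * q ^ p := by
    rw [← mul_rpow hp₀.le hq₀.le]
    exact rpow_le_rpow (by linarith) (by nlinarith) hp₀.le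
  rw [div_le_iff₀ (by positivity), rpow_sub_one hq₀.ne']
  calc (p + q - 1) ^ p ≤ p ^ p * q ^ p := hle
    _ = q ^ p / q * (p ^ p * q) := by field_simp

lemma abs_spow_sub_spow_rpow_le_of_le {p q a b c d : ℝ} (hp : 2 ≤ p) (hq : 1 ≤ q)
    (h : a - b = c - d) (hba : b ≤ a) :
    |spow a ((p + q - 1) / p) - spow b ((p + q - 1) / p)| ^ p ≤
      (2 ^ (p - 2) * (p + q - 1) ^ p / (p ^ p * q)) *
        (spow c (p - 1) - spow d (p - 1)) * (spow a q - spow b q) := by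
  have hp₀ : 0 < p := by linarith
  set t := (p + q - 1) / p with ht_def
  have ht : 1 ≤ t := by rw [ht_def, le_div_iff₀ hp₀]; linarith
  have ht_sub : t - 1 = (q - 1) / p := by rw [ht_def]; field_simp; ring
  set I := ∫ x in b..a, |x| ^ ((q - 1) / p)
  set K := ∫ x in b..a, |x| ^ (q - 1)
  have hI : 0 ≤ I := intervalIntegral.integral_nonneg hba fun x _ => by positivity
  have hK : 0 ≤ K := intervalIntegral.integral_nonneg hba fun x _ => by positivity
  have hcont : Continuous fun x : ℝ => |x| ^ ((q - 1) / p) :=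
    continuous_abs_rpow (div_nonneg (by linarith) hp₀.le)
  have holder : I ^ p ≤ (a - b) ^ (p - 1) * K := by
    have := rpow_intervalIntegral_le (f := fun x => |x| ^ ((q - 1) / p)) (by linarith) hba
      (fun x _ => by positivity) (hcont.intervalIntegrable _ _)
      ((hcont.rpow_const fun _ => Or.inr hp₀.le).intervalIntegrable _ _)
    simp_rw [← rpow_mul (abs_nonneg _), div_mul_cancel₀ _ hp₀.ne'] at this
    exact this
  have htwo : (a - b) ^ (p - 1) ≤ 2 ^ (p - 2) * (spow c (p - 1) - spow d (p - 1)) := by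
    rw [h, show p - 2 = p - 1 - 1 by ring]
    exact sub_rpow_le_two_rpow_mul_spow_sub (by linarith) (by linarith)
  have hIeq : spow a t - spow b t = t * I := by rw [spow_sub_spow_eq_integral ht, ht_sub]
  have hKeq : spow a q - spow b q = q * K := spow_sub_spow_eq_integral hq a b
  have hpq : 0 ≤ p + q - 1 := by linarith
  rw [hIeq, hKeq, abs_of_nonneg (by positivity), mul_rpow (by positivity) hI, ht_def,
    div_rpow hpq hp₀.le]
  calc ((p + q - 1) ^ p / p ^ p) * I ^ p
      ≤ ((p + q - 1) ^ p / p ^ p) * (2 ^ (p - 2) * (spow c (p - 1) - spow d (p - 1)) * K) :=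
        mul_le_mul_of_nonneg_left (holder.trans (mul_le_mul_of_nonneg_right htwo hK))
          (by positivity)
    _ = _ := by field_simp

lemma abs_spow_sub_spow_rpow_le {p q a b c d : ℝ} (hp : 2 ≤ p) (hq : 1 ≤ q)
    (h : a - b = c - d) :
    |spow a ((p + q - 1) / p) - spow b ((p + q - 1) / p)| ^ p ≤
      (2 ^ (p - 2) * (p + q - 1) ^ p / (p ^ p * q)) *
        (spow c (p - 1) - spow d (p - 1)) * (spow a q - spow b q) := by
  rcases le_total b a with hba | hab
  · exact abs_spow_sub_spow_rpow_le_of_le hp hq h hba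
  · have := abs_spow_sub_spow_rpow_le_of_le hp hq (by linarith : b - a = d - c) hab
    rw [abs_sub_comm] at this
    convert this using 1
    ring

theorem stmt4 (p : ℝ) (hp : 2 ≤ p) :
    (∀ q a b c d : ℝ, 1 ≤ q → a - b = c - d →
      |spow a ((p + q - 1) / p) - spow b ((p + q - 1) / p)| ^ p ≤
        (2 ^ (p - 2) * (p + q - 1) ^ p / (p ^ p * q)) *
          (spow c (p - 1) - spow d (p - 1)) * (spow a q - spow b q)) ∧
    ∃ C > (0 : ℝ), ∀ q a b c d : ℝ, 1 ≤ q → a - b = c - d →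
      |spow a ((p + q - 1) / p) - spow b ((p + q - 1) / p)| ^ p ≤
        C * q ^ (p - 1) * (spow c (p - 1) - spow d (p - 1)) * (spow a q - spow b q) := by
  refine ⟨fun q a b c d hq h => abs_spow_sub_spow_rpow_le hp hq h,
    2 ^ (p - 2), by positivity, fun q a b c d hq h => ?_⟩
  have hcoef : 2 ^ (p - 2) * (p + q - 1) ^ p / (p ^ p * q) ≤ 2 ^ (p - 2) * q ^ (p - 1) := by
    rw [mul_div_assoc]
    exact mul_le_mul_of_nonneg_left (add_sub_one_rpow_div_le (by linarith) hq) (by positivity)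
  have hsign := spow_sub_mul_spow_sub_nonneg (r := p - 1) (s := q) (by linarith) (by linarith) h
  calc _ ≤ _ := abs_spow_sub_spow_rpow_le hp hq h
    _ = (2 ^ (p - 2) * (p + q - 1) ^ p / (p ^ p * q)) *
          ((spow c (p - 1) - spow d (p - 1)) * (spow a q - spow b q)) := by ring
    _ ≤ (2 ^ (p - 2) * q ^ (p - 1)) *
          ((spow c (p - 1) - spow d (p - 1)) * (spow a q - spow b q)) :=
        mul_le_mul_of_nonneg_right hcoef hsign
    _ = _ := by ring
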